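/- arXiv:1608.02418 — 2 statements merged into one kernel-verified Lean document; each statement's English description precedes it below -/
import Mathlib

section
/- Let A be a finite dimensional algebra over a field k and M a finitely generated right A-module. Then M is faithful if and only if DA is generated by M, i.e. there exists an integer d ≥ 0 and an epimorphism of A-modules M^d → D(A), where D = Hom_k(−,k) is the standard duality. -/
open CategoryTheory MulOpposite


/-- the `k`-linear dual `D A = Hom_k(A, k)` as a right `A`-module via
`(f • a) x = f (a * x)`. -/
def dualMod (k : Type) [Field k] (A : Type) [Ring A] [Algebra k A] :
    Module Aᵐᵒᵖ (A →ₗ[k] k) where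
  smul a f := f.comp (LinearMap.mulLeft k a.unop)
  one_smul f := LinearMap.ext fun x => by
    show f ((unop (1 : Aᵐᵒᵖ)) * x) = f x
    rw [show unop (1 : Aᵐᵒᵖ) = (1 : A) from rfl, one_mul]
  mul_smul a b f := LinearMap.ext fun x => by
    show f ((unop (a * b)) * x) = f ((unop b) * ((unop a) * x))
    rw [show unop (a * b) = unop b * unop a from rfl, mul_assoc]
  smul_zero a := LinearMap.ext fun x => rfl
  smul_add a f g := LinearMap.ext fun x => rfl
  add_smul a b f := LinearMap.ext fun x => by
    show f ((unop (a + b)) * x) = f ((unop a) * x) + f ((unop b) * x)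
    rw [show unop (a + b) = unop a + unop b from rfl, add_mul, map_add]
  zero_smul f := LinearMap.ext fun x => by
    show f ((unop (0 : Aᵐᵒᵖ)) * x) = 0
    rw [show unop (0 : Aᵐᵒᵖ) = (0 : A) from rfl, zero_mul, map_zero]

/-- A finitely generated right module `M` over a finite dimensional algebra `A`
is faithful iff `D A` is generated by `M`, i.e. there is an epimorphism of
right `A`-modules `M^d → D A` for some `d ≥ 0`. -/
theorem faithful_iff_dual_generated
    (k : Type) [Field k] (A : Type) [Ring A] [Algebra k A] [FiniteDimensional k A]
    (M : Type) [AddCommGroup M] [Module Aᵐᵒᵖ M] [Module.Finite Aᵐᵒᵖ M] :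
    letI : Module Aᵐᵒᵖ (A →ₗ[k] k) := dualMod k A
    ((∀ a : A, (∀ m : M, op a • m = 0) → a = 0) ↔
      ∃ (d : ℕ) (f : (Fin d → M) →ₗ[Aᵐᵒᵖ] (A →ₗ[k] k)), Function.Surjective f) := by
  letI : Module Aᵐᵒᵖ (A →ₗ[k] k) := dualMod k A
  have hsmul : ∀ (x : Aᵐᵒᵖ) (φ : A →ₗ[k] k) (a : A), (x • φ) a = φ (x.unop * a) :=
    fun _ _ _ => rfl
  constructor
  · -- faithful → generated
    intro hfa
    letI instkM : Module k M := Module.compHom M (algebraMap k Aᵐᵒᵖ)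
    haveI : IsScalarTower k Aᵐᵒᵖ M :=
      ⟨fun c x m => by rw [Algebra.smul_def, mul_smul]; rfl⟩
    haveI : Module.Finite k Aᵐᵒᵖ :=
      Module.Finite.equiv (MulOpposite.opLinearEquiv k : A ≃ₗ[k] Aᵐᵒᵖ)
    haveI : Module.Finite k M := Module.Finite.trans Aᵐᵒᵖ M
    -- the basic maps M → D A
    set Φ : Module.Dual k M → M →ₗ[Aᵐᵒᵖ] (A →ₗ[k] k) := fun g =>
      { toFun := fun m =>
          { toFun := fun a => g (op a • m)
            map_add' := fun a a' => by
              show g (op (a + a') • m) = g (op a • m) + g (op a' • m)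
              rw [show op (a + a') = op a + op a' from rfl, add_smul, map_add]
            map_smul' := fun c a => by
              show g (op (c • a) • m) = c • g (op a • m)
              rw [show op (c • a) = c • op a from rfl, smul_assoc, map_smul] }
        map_add' := fun m m' => LinearMap.ext fun a => by
          show g (op a • (m + m')) = g (op a • m) + g (op a • m')
          rw [smul_add, map_add]
        map_smul' := fun x m => LinearMap.ext fun a => by
          show g (op a • x • m) = g (op (x.unop * a) • m)
          rw [smul_smul, op_mul, op_unop] } with hΦ
    have hΦapp : ∀ g m a, Φ g m a = g (op a • m) := fun g m a => rfl
    set d := Module.finrank k (Module.Dual k M) with hd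
    set b : Module.Basis (Fin d) k (Module.Dual k M) := Module.finBasis k (Module.Dual k M) with hb
    set F : (Fin d → M) →ₗ[Aᵐᵒᵖ] (A →ₗ[k] k) :=
      ∑ i : Fin d, (Φ (b i)).comp (LinearMap.proj i) with hF
    have hFapp : ∀ x : Fin d → M, F x = ∑ i : Fin d, Φ (b i) (x i) := fun x => by
      rw [hF]; simp [LinearMap.sum_apply]
    refine ⟨d, F, ?_⟩
    rw [← LinearMap.range_eq_top]
    haveI : IsScalarTower k Aᵐᵒᵖ (A →ₗ[k] k) :=
      ⟨fun c x φ => LinearMap.ext fun a => by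
        show φ ((c • x).unop * a) = c • φ (x.unop * a)
        rw [show (c • x).unop = c • x.unop from rfl, smul_mul_assoc, map_smul]⟩
    -- the k-span of the images
    set W : Submodule k (A →ₗ[k] k) :=
      Submodule.span k (Set.range fun p : Module.Dual k M × M => Φ p.1 p.2) with hW
    have hWrange : W ≤ (LinearMap.range F).restrictScalars k := by
      rw [hW, Submodule.span_le]
      rintro φ ⟨⟨g, m⟩, rfl⟩
      have hrepr : Φ g m = ∑ i : Fin d, b.repr g i • Φ (b i) m := by
        ext a
        have := Module.Basis.sum_repr b g
        conv_lhs => rw [hΦapp, ← this]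
        simp [LinearMap.sum_apply, LinearMap.smul_apply, hΦapp]
        conv_lhs => rw [← this, LinearMap.sum_apply]
        simp only [LinearMap.smul_apply, smul_eq_mul]
      show (Φ g) m ∈ (LinearMap.range F).restrictScalars k
      rw [Submodule.restrictScalars_mem, hrepr]
      refine Submodule.sum_mem _ fun i _ => ?_
      have hmem : Φ (b i) m ∈ LinearMap.range F :=
        ⟨Pi.single i m, by
          rw [hFapp]
          rw [Finset.sum_eq_single i (fun j _ hj => by
            rw [Pi.single_eq_of_ne hj, map_zero]) (fun h => absurd (Finset.mem_univ i) h)]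
          rw [Pi.single_eq_same]⟩
      -- k-smul agrees with the action of scalars via the algebra map
      have : (b.repr g i : k) • Φ (b i) m = op (algebraMap k A (b.repr g i)) • Φ (b i) m := by
        ext a
        rw [hsmul]
        show (b.repr g i : k) • (Φ (b i) m) a = Φ (b i) m (algebraMap k A (b.repr g i) * a)
        rw [← Algebra.smul_def, map_smul]
      rw [this]
      exact Submodule.smul_mem _ _ hmem
    have hWtop : W = ⊤ := by
      have hco : W.dualCoannihilator = ⊥ := by
        rw [eq_bot_iff]
        intro a ha
        rw [Submodule.mem_dualCoannihilator] at ha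
        have hzero : ∀ m : M, op a • m = 0 := by
          intro m
          rw [← Module.forall_dual_apply_eq_zero_iff k]
          intro g
          have := ha (Φ g m) (Submodule.subset_span ⟨(g, m), rfl⟩)
          rwa [hΦapp] at this
        simpa using hfa a hzero
      have := Subspace.dualCoannihilator_dualAnnihilator_eq (W := W)
      rw [hco, Submodule.dualAnnihilator_bot] at this
      exact this.symm
    rw [hWtop] at hWrange
    rw [← Submodule.restrictScalars_eq_top_iff (S := k)]
    exact top_le_iff.mp hWrange
  · -- generated → faithful
    rintro ⟨d, f, hf⟩ a ha
    have key : ∀ φ : Module.Dual k A, φ a = 0 := by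
      intro φ
      obtain ⟨x, hx⟩ := hf φ
      have h0 : op a • φ = 0 := by
        rw [← hx, ← map_smul]
        have hxz : op a • x = 0 := funext fun i => ha (x i)
        rw [hxz, map_zero]
      have := congrArg (fun ψ : A →ₗ[k] k => ψ 1) h0
      simpa [hsmul, mul_one] using this
    exact (Module.forall_dual_apply_eq_zero_iff k a).mp key
end

section
/- Let Λ be a finite dimensional algebra and X, Y finitely generated Λ-modules. Then Hom_Λ(X, τ_Λ Y) = 0 if and only if Ext^1_Λ(Y, Gen X) = 0, i.e. Ext^1_Λ(Y, Z) = 0 for every module Z generated by X. -/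
open CategoryTheory MulOpposite

open CategoryTheory MulOpposite

/-! Core definitions: right `A`-modules are modules over `Aᵐᵒᵖ`. -/

/-- The category of (small) modules over a ring `R`.  For a `k`-algebra `A`,
right `A`-modules are `Mdl Aᵐᵒᵖ`. -/
abbrev Mdl (R : Type) [Ring R] := ModuleCat.{0} R

section Generic

variable (R : Type) [Ring R]

/-- `f : P → M` is a projective cover: `P` projective, `f` surjective with
superfluous kernel. -/
def IsProjCover {P M : Mdl R} (f : P →ₗ[R] M) : Prop :=
  Module.Projective R P ∧ Function.Surjective f ∧
    ∀ N : Submodule R P, N ⊔ LinearMap.ker f = ⊤ → N = ⊤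

/-- `f : M → I` is an injective envelope: `I` injective, `f` injective with
essential image. -/
def IsInjEnv {M I : Mdl R} (f : M →ₗ[R] I) : Prop :=
  Module.Injective R I ∧ Function.Injective f ∧
    ∀ K : Submodule R I, K ⊓ LinearMap.range f = ⊥ → K = ⊥

/-- `Hom_R(X, Y) = 0`. -/
def HomZero (X Y : Mdl R) : Prop := ∀ f : X →ₗ[R] Y, f = 0

/-- `X ∈ Gen M`: `X` is an epimorphic image of a finite direct sum of copies of `M`. -/
def MemGen (M X : Mdl R) : Prop :=
  ∃ (d : ℕ) (f : (Fin d → M) →ₗ[R] X), Function.Surjective f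

/-- `X ∈ add M`: `X` is a direct summand of a finite direct sum of copies of `M`. -/
def MemAdd (M X : Mdl R) : Prop :=
  ∃ (n : ℕ) (s : X →ₗ[R] (Fin n → M)) (r : (Fin n → M) →ₗ[R] X),
    r.comp s = LinearMap.id

/-- projective dimension at most 1: a length-one projective resolution exists. -/
def PdLE1 (M : Mdl R) : Prop :=
  ∃ (P1 P0 : Mdl R) (d1 : P1 →ₗ[R] P0) (d0 : P0 →ₗ[R] M),
    Module.Projective R P1 ∧ Module.Projective R P0 ∧
    Function.Injective d1 ∧ Function.Surjective d0 ∧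
    LinearMap.range d1 = LinearMap.ker d0

/-- projective dimension at most 2. -/
def PdLE2 (M : Mdl R) : Prop :=
  ∃ (P2 P1 P0 : Mdl R) (d2 : P2 →ₗ[R] P1) (d1 : P1 →ₗ[R] P0) (d0 : P0 →ₗ[R] M),
    Module.Projective R P2 ∧ Module.Projective R P1 ∧ Module.Projective R P0 ∧
    Function.Injective d2 ∧ Function.Surjective d0 ∧
    LinearMap.range d2 = LinearMap.ker d1 ∧ LinearMap.range d1 = LinearMap.ker d0

/-- injective dimension at most 1. -/
def IdLE1 (M : Mdl R) : Prop :=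
  ∃ (I0 I1 : Mdl R) (d0 : M →ₗ[R] I0) (d1 : I0 →ₗ[R] I1),
    Module.Injective R I0 ∧ Module.Injective R I1 ∧
    Function.Injective d0 ∧ Function.Surjective d1 ∧
    LinearMap.range d0 = LinearMap.ker d1

/-- global dimension at most 2 (every module has projective dimension ≤ 2). -/
def GlDimLE2 : Prop := ∀ M : Mdl R, PdLE2 R M

/-- global dimension exactly 2. -/
def GlDimEq2 : Prop := GlDimLE2 R ∧ ¬ ∀ M : Mdl R, PdLE1 R M

/-- `W` is a first syzygy `Ω M` of `M` (kernel of a projective cover). -/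
def IsSyzygy (M W : Mdl R) : Prop :=
  ∃ (P : Mdl R) (f : P →ₗ[R] M), IsProjCover R f ∧
    Nonempty (W ≃ₗ[R] LinearMap.ker f)

/-- `W` is a first cosyzygy `Ω⁻¹ M` of `M` (cokernel of an injective envelope). -/
def IsCosyzygy (M W : Mdl R) : Prop :=
  ∃ (I : Mdl R) (f : M →ₗ[R] I), IsInjEnv R f ∧
    Nonempty (W ≃ₗ[R] (I ⧸ LinearMap.range f))

/-- `P1 --d1--> P0 --d0--> M → 0` is a minimal projective presentation. -/
def IsMinPres {P1 P0 M : Mdl R} (d1 : P1 →ₗ[R] P0) (d0 : P0 →ₗ[R] M) : Prop :=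
  IsProjCover R d0 ∧ Module.Projective R P1 ∧
  LinearMap.range d1 = LinearMap.ker d0 ∧
  ∀ N : Submodule R P1, N ⊔ LinearMap.ker d1 = ⊤ → N = ⊤

/-- `Ext¹_R(X, Y) = 0`, expressed as: every short exact sequence
`0 → Y → Z → X → 0` splits. -/
def Ext1Zero (X Y : Mdl R) : Prop :=
  ∀ (Z : Mdl R) (i : Y →ₗ[R] Z) (p : Z →ₗ[R] X),
    Function.Injective i → Function.Surjective p →
    LinearMap.range i = LinearMap.ker p →
    ∃ s : X →ₗ[R] Z, p.comp s = LinearMap.id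

/-- partial tilting module: `pd ≤ 1` and `Ext¹(M,M) = 0`. -/
def PartialTilting (M : Mdl R) : Prop := PdLE1 R M ∧ Ext1Zero R M M

/-- tilting module: partial tilting plus a coresolution
`0 → R → T' → T'' → 0` with `T', T'' ∈ add M` of the regular module. -/
def IsTilting (M : Mdl R) : Prop :=
  PartialTilting R M ∧
  ∃ (T' T'' : Mdl R) (i : ModuleCat.of R R →ₗ[R] T') (p : T' →ₗ[R] T''),
    MemAdd R M T' ∧ MemAdd R M T'' ∧
    Function.Injective i ∧ Function.Surjective p ∧
    LinearMap.range i = LinearMap.ker p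

/-- an indecomposable (nonzero) module. -/
def Indecomp (M : Mdl R) : Prop :=
  Nontrivial M ∧ ∀ (U V : Submodule R M), IsCompl U V → U = ⊥ ∨ V = ⊥

/-- the number of isomorphism classes of simple `R`-modules is `n`. -/
def SimpleCount (n : ℕ) : Prop :=
  ∃ S : Fin n → Mdl R,
    (∀ i, IsSimpleModule R (S i)) ∧
    (∀ i j, Nonempty ((S i) ≃ₗ[R] (S j)) → i = j) ∧
    ∀ X : Mdl R, IsSimpleModule R X → ∃ i, Nonempty (X ≃ₗ[R] S i)

end Generic

section Duality

variable (k : Type) [Field k] (A : Type) [Ring A] [Algebra k A]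

/-- `N` (a right `A`-module) is the `k`-linear dual `D M` of the left `A`-module `M`:
witnessed by a nondegenerate balanced `k`-bilinear pairing. -/
def IskDual (N : Mdl Aᵐᵒᵖ) (M : Mdl A) : Prop :=
  ∃ φ : N → M → k,
    (∀ n n' m, φ (n + n') m = φ n m + φ n' m) ∧
    (∀ n m m', φ n (m + m') = φ n m + φ n m') ∧
    (∀ (c : k) n m, φ n ((algebraMap k A c) • m) = c * φ n m) ∧
    (∀ (a : A) n m, φ (op a • n) m = φ n (a • m)) ∧
    (∀ n, (∀ m, φ n m = 0) → n = 0) ∧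
    (∀ m, (∀ n, φ n m = 0) → m = 0)

/-- `T = τ M`: the Auslander–Reiten translate of the right `A`-module `M`,
i.e. the `k`-dual of the transpose `Tr M` computed from a minimal projective
presentation. -/
def IsTau (M T : Mdl Aᵐᵒᵖ) : Prop :=
  ∃ (P1 P0 : Mdl Aᵐᵒᵖ) (d1 : P1 →ₗ[Aᵐᵒᵖ] P0) (d0 : P0 →ₗ[Aᵐᵒᵖ] M),
    IsMinPres Aᵐᵒᵖ d1 d0 ∧
    ∃ (Tr : Mdl A) (q : (P1 →ₗ[Aᵐᵒᵖ] A) →ₗ[A] Tr),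
      Function.Surjective q ∧
      (∀ g : P1 →ₗ[Aᵐᵒᵖ] A, q g = 0 ↔ ∃ f : P0 →ₗ[Aᵐᵒᵖ] A, g = f.comp d1) ∧
      IskDual k A T Tr

/-- `T = τ⁻¹ M`: the inverse Auslander–Reiten translate, `Tr (D M)`, computed
from a minimal projective presentation of the left module `D M`. -/
def IsTauInv (M T : Mdl Aᵐᵒᵖ) : Prop :=
  ∃ (DM : Mdl A), IskDual k A M DM ∧
  ∃ (Q1 Q0 : Mdl A) (d1 : Q1 →ₗ[A] Q0) (d0 : Q0 →ₗ[A] DM),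
    IsMinPres A d1 d0 ∧
    ∃ q : (Q1 →ₗ[A] A) →ₗ[Aᵐᵒᵖ] T,
      Function.Surjective q ∧
      ∀ g : Q1 →ₗ[A] A, q g = 0 ↔ ∃ f : Q0 →ₗ[A] A, g = f.comp d1

/-- `W = τ⁻¹ Ω⁻¹ M`. -/
def IsTauInvCosyz (M W : Mdl Aᵐᵒᵖ) : Prop :=
  ∃ V, IsCosyzygy Aᵐᵒᵖ M V ∧ IsTauInv k A V W

/-- `W = τ Ω M`. -/
def IsTauSyz (M W : Mdl Aᵐᵒᵖ) : Prop :=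
  ∃ V, IsSyzygy Aᵐᵒᵖ M V ∧ IsTau k A V W

/-- `M` is `τ`-rigid: `Hom(M, τM) = 0`. -/
def TauRigid (M : Mdl Aᵐᵒᵖ) : Prop :=
  ∀ T, IsTau k A M T → HomZero Aᵐᵒᵖ M T

/-- `M` is `τ`-tilting: `τ`-rigid with as many pairwise nonisomorphic
indecomposable summands as there are simple modules. -/
def TauTilting (M : Mdl Aᵐᵒᵖ) : Prop :=
  TauRigid k A M ∧
  ∃ (n : ℕ) (N : Fin n → Mdl Aᵐᵒᵖ),
    (∀ i, Indecomp Aᵐᵒᵖ (N i)) ∧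
    (∀ i j, Nonempty ((N i) ≃ₗ[Aᵐᵒᵖ] (N j)) → i = j) ∧
    Nonempty (M ≃ₗ[Aᵐᵒᵖ] ((i : Fin n) → N i)) ∧
    SimpleCount Aᵐᵒᵖ n

end Duality


section AuxiliaryLemmas

section Aux
variable {R : Type*} [Ring R]

/-- factor a linear map through a surjection whose kernel it kills -/
theorem factor_through_surjective {M N P : Type*} [AddCommGroup M] [AddCommGroup N]
    [AddCommGroup P] [Module R M] [Module R N] [Module R P]
    (q : M →ₗ[R] N) (hq : Function.Surjective q) (θ : M →ₗ[R] P)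
    (h : LinearMap.ker q ≤ LinearMap.ker θ) :
    ∃ ζ : N →ₗ[R] P, ζ ∘ₗ q = θ := by
  refine ⟨(LinearMap.ker q).liftQ θ h ∘ₗ (LinearMap.quotKerEquivOfSurjective q hq).symm, ?_⟩
  ext m
  have h1 : (LinearMap.quotKerEquivOfSurjective q hq).symm (q m)
      = Submodule.Quotient.mk m := by
    rw [LinearEquiv.symm_apply_eq]
    rfl
  simp [h1]

/-- a module is finitely generated if it has a surjection-with-superfluous-kernel
onto something whose image is f.g. -/
theorem finite_of_superfluous {P M : Type*} [AddCommGroup P] [AddCommGroup M]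
    [Module R P] [Module R M] (f : P →ₗ[R] M)
    (hfg : (LinearMap.range f).FG)
    (hsup : ∀ N : Submodule R P, N ⊔ LinearMap.ker f = ⊤ → N = ⊤) :
    Module.Finite R P := by
  obtain ⟨s, hs⟩ := hfg
  have hpre : ∀ y : M, y ∈ LinearMap.range f → ∃ p : P, f p = y := fun y hy => hy
  choose pre hpre using hpre
  classical
  let t : Finset P := s.attach.image (fun y => pre y.1 (by
    rw [← hs]; exact Submodule.subset_span y.2))
  have hNtop : Submodule.span R (t : Set P) ⊔ LinearMap.ker f = ⊤ := by
    rw [Submodule.eq_top_iff']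
    intro p
    have hfp : f p ∈ Submodule.span R (s : Set M) := by rw [hs]; exact ⟨p, rfl⟩
    have hmap : Submodule.span R (s : Set M) ≤ Submodule.map f (Submodule.span R (t : Set P)) := by
      rw [Submodule.span_le]
      intro y hy
      have : pre y (by rw [← hs]; exact Submodule.subset_span hy) ∈ (t : Set P) := by
        simp only [t, Finset.coe_image, Set.mem_image]
        exact ⟨⟨y, hy⟩, Finset.mem_attach _ _, rfl⟩
      refine ⟨_, Submodule.subset_span this, hpre _ _⟩
    obtain ⟨n, hn, hfn⟩ := hmap hfp
    have : p - n ∈ LinearMap.ker f := by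
      simp [LinearMap.mem_ker, map_sub, hfn]
    have hp : p = n + (p - n) := by abel
    rw [hp]
    exact Submodule.add_mem_sup hn this
  have := hsup _ hNtop
  exact ⟨⟨t, this⟩⟩

end Aux


theorem pi_expand {Λ : Type} [Ring Λ] {n : ℕ} (v : Fin n → Λᵐᵒᵖ) :
    ∑ i, (v i) • (Pi.single i 1 : Fin n → Λᵐᵒᵖ) = v := by
  ext j
  rw [Finset.sum_apply]
  have h3 : ∀ i, ((v i) • (Pi.single i (1:Λᵐᵒᵖ) : Fin n → Λᵐᵒᵖ)) j
      = Pi.single (M := fun _ => Λᵐᵒᵖ) i (v i) j := by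
    intro i
    rw [Pi.smul_apply]
    by_cases h : i = j
    · subst h; simp
    · simp [Pi.single_eq_of_ne (Ne.symm h), Pi.single_eq_of_ne' h]
  simp only [h3]
  simp [Pi.single_apply]

section DualBasis
variable {Λ : Type} [Ring Λ]

-- check the module instance for op action on Λ
example (a b : Λ) : (op a) • b = b * a := by exact rfl

/-- dual basis for a f.g. projective right module -/
theorem exists_dual_basis (P : Type) [AddCommGroup P] [Module Λᵐᵒᵖ P]
    [Module.Projective Λᵐᵒᵖ P] [Module.Finite Λᵐᵒᵖ P] :
    ∃ (n : ℕ) (x : Fin n → P) (α : Fin n → (P →ₗ[Λᵐᵒᵖ] Λ)),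
      ∀ p : P, ∑ i, op (α i p) • x i = p := by
  obtain ⟨n, π, hπ⟩ := Module.Finite.exists_fin' Λᵐᵒᵖ P
  obtain ⟨σ, hσ⟩ := Module.projective_lifting_property π LinearMap.id hπ
  classical
  refine ⟨n, fun i => π (Pi.single i 1), fun i =>
    { toFun := fun p => unop (σ p i)
      map_add' := by intro p q; simp
      map_smul' := by intro r p; simp [MulOpposite.smul_eq_mul_unop]
    }, ?_⟩
  intro p
  have h1 : ∀ i, (op (unop (σ p i)) : Λᵐᵒᵖ) • π (Pi.single i 1) = π ((σ p i) • Pi.single i 1) := by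
    intro i; rw [op_unop, ← map_smul]
  simp only [LinearMap.coe_mk, AddHom.coe_mk, h1]
  rw [← map_sum]
  have h2 : ∑ i, (σ p i) • (Pi.single i 1 : Fin n → Λᵐᵒᵖ) = σ p := by
    ext j
    rw [Finset.sum_apply]
    have h3 : ∀ i, ((σ p i) • (Pi.single i (1:Λᵐᵒᵖ) : Fin n → Λᵐᵒᵖ)) j
        = Pi.single (M := fun _ => Λᵐᵒᵖ) i (σ p i) j := by
      intro i
      rw [Pi.smul_apply]
      by_cases h : i = j
      · subst h; simp
      · simp [Pi.single_eq_of_ne (Ne.symm h), Pi.single_eq_of_ne' h]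
    simp only [h3]
    simp [Pi.single_apply]
  rw [h2]
  have := LinearMap.congr_fun hσ p
  simpa using this

end DualBasis

section KMod
variable (k : Type) [Field k] (Λ : Type) [Ring Λ] [Algebra k Λ]

/-- the `k`-module structure on a right `Λ`-module -/
def modK (M : Type) [AddCommGroup M] [Module Λᵐᵒᵖ M] : Module k M :=
  Module.compHom M (algebraMap k Λᵐᵒᵖ)

/-- the `k`-module structure on a left `Λ`-module -/
def modKL (M : Type) [AddCommGroup M] [Module Λ M] : Module k M :=
  Module.compHom M (algebraMap k Λ)

theorem towerK (M : Type) [AddCommGroup M] [Module Λᵐᵒᵖ M] :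
    letI := modK k Λ M
    IsScalarTower k Λᵐᵒᵖ M := by
  letI := modK k Λ M
  refine ⟨fun c a m => ?_⟩
  show (c • a) • m = (algebraMap k Λᵐᵒᵖ c) • (a • m)
  rw [Algebra.smul_def, mul_smul]

theorem towerKL (M : Type) [AddCommGroup M] [Module Λ M] :
    letI := modKL k Λ M
    IsScalarTower k Λ M := by
  letI := modKL k Λ M
  refine ⟨fun c a m => ?_⟩
  show (c • a) • m = (algebraMap k Λ c) • (a • m)
  rw [Algebra.smul_def, mul_smul]

theorem smulCommK (M : Type) [AddCommGroup M] [Module Λᵐᵒᵖ M] :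
    letI := modK k Λ M
    SMulCommClass Λᵐᵒᵖ k M := by
  letI := modK k Λ M
  refine ⟨fun a c m => ?_⟩
  show a • (algebraMap k Λᵐᵒᵖ c) • m = (algebraMap k Λᵐᵒᵖ c) • (a • m)
  rw [← mul_smul, ← mul_smul, ← Algebra.commutes c a]

theorem finK [FiniteDimensional k Λ] (M : Type) [AddCommGroup M] [Module Λᵐᵒᵖ M]
    [Module.Finite Λᵐᵒᵖ M] :
    letI := modK k Λ M
    Module.Finite k M := by
  letI := modK k Λ M
  haveI := towerK k Λ M
  haveI : Module.Finite k Λᵐᵒᵖ := Module.Finite.equiv (MulOpposite.opLinearEquiv k (M := Λ))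
  exact Module.Finite.trans Λᵐᵒᵖ M

theorem finKL [FiniteDimensional k Λ] (M : Type) [AddCommGroup M] [Module Λ M]
    [Module.Finite Λ M] :
    letI := modKL k Λ M
    Module.Finite k M := by
  letI := modKL k Λ M
  haveI := towerKL k Λ M
  exact Module.Finite.trans Λ M

/-- over a finite dimensional algebra, submodules of f.g. modules are f.g. -/
theorem submodule_fgK [FiniteDimensional k Λ] (M : Type) [AddCommGroup M] [Module Λᵐᵒᵖ M]
    [Module.Finite Λᵐᵒᵖ M] (N : Submodule Λᵐᵒᵖ M) : N.FG := by
  letI := modK k Λ M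
  haveI := towerK k Λ M
  haveI : Module.Finite k M := finK k Λ M
  haveI : IsNoetherian k M := inferInstance
  obtain ⟨s, hs⟩ := IsNoetherian.noetherian (N.restrictScalars k)
  refine ⟨s, le_antisymm (Submodule.span_le.2 ?_) (fun x hx => ?_)⟩
  · intro x hx
    have : x ∈ N.restrictScalars k := hs ▸ Submodule.subset_span hx
    exact this
  · have h1 : x ∈ Submodule.span k (s : Set M) := by
      rw [hs]; exact hx
    exact Submodule.span_le_restrictScalars k Λᵐᵒᵖ (s : Set M) h1

/-- descending chains of submodules of a f.g. module stabilize -/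
theorem chain_stabilizesK [FiniteDimensional k Λ] (M : Type) [AddCommGroup M]
    [Module Λᵐᵒᵖ M] [Module.Finite Λᵐᵒᵖ M] (U : ℕ → Submodule Λᵐᵒᵖ M)
    (hmono : ∀ n, U (n+1) ≤ U n) : ∃ n, U n ≤ U (n+1) := by
  by_contra hcon
  push_neg at hcon
  letI := modK k Λ M
  haveI := towerK k Λ M
  haveI : Module.Finite k M := finK k Λ M
  let r : ℕ → ℕ := fun n => Module.finrank k ((U n).restrictScalars k)
  have hdec : ∀ n, r (n+1) < r n := by
    intro n
    refine Submodule.finrank_lt_finrank_of_lt ?_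
    refine lt_of_le_of_ne (fun x hx => hmono n hx) (fun he => ?_)
    have := hcon n
    exact this (fun x hx => by
      have : x ∈ (U (n+1)).restrictScalars k := by rw [he]; exact hx
      exact this)
  have hbound : ∀ n, r n + n ≤ r 0 := by
    intro n
    induction n with
    | zero => omega
    | succ m ih =>
      have := hdec m
      omega
  have := hbound (r 0 + 1)
  omega

end KMod

section Pairing
variable {k : Type} [Field k] {Λ : Type} [Ring Λ]
variable {P1 P0 T Z : Type}
  [AddCommGroup P1] [Module Λᵐᵒᵖ P1] [AddCommGroup P0] [Module Λᵐᵒᵖ P0]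
  [AddCommGroup T] [Module Λᵐᵒᵖ T] [AddCommGroup Z] [Module Λᵐᵒᵖ Z]
  {Tr : Type} [AddCommGroup Tr] [Module Λ Tr]

/-- the "simple tensor" map `g0 ⊗ z : P1 → Z`. -/
def tmul (g0 : P1 →ₗ[Λᵐᵒᵖ] Λ) (z : Z) : P1 →ₗ[Λᵐᵒᵖ] Z where
  toFun p := op (g0 p) • z
  map_add' p q := by simp only [map_add, MulOpposite.op_add, add_smul]
  map_smul' a p := by
    simp only [map_smul, RingHom.id_apply, MulOpposite.smul_eq_mul_unop, op_mul, op_unop,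
      mul_smul]

@[simp] theorem tmul_apply (g0 : P1 →ₗ[Λᵐᵒᵖ] Λ) (z : Z) (p : P1) :
    tmul g0 z p = op (g0 p) • z := rfl

theorem tmul_comp (f0 : P0 →ₗ[Λᵐᵒᵖ] Λ) (z : Z) (d1 : P1 →ₗ[Λᵐᵒᵖ] P0) :
    tmul (f0 ∘ₗ d1) z = (tmul f0 z) ∘ₗ d1 := rfl

theorem tmul_smul (g0 : P1 →ₗ[Λᵐᵒᵖ] Λ) (z : Z) (a : Λ) :
    tmul (a • g0) z = tmul g0 (op a • z) := by
  apply LinearMap.ext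
  intro p
  show op ((a • g0) p) • z = op (g0 p) • op a • z
  rw [LinearMap.smul_apply, smul_eq_mul, op_mul, mul_smul]

theorem tmul_add (g0 : P1 →ₗ[Λᵐᵒᵖ] Λ) (z z' : Z) :
    tmul g0 (z + z') = tmul g0 z + tmul g0 z' := by
  apply LinearMap.ext
  intro p
  show op (g0 p) • (z + z') = op (g0 p) • z + op (g0 p) • z'
  rw [smul_add]

theorem comp_tmul (g0 : P1 →ₗ[Λᵐᵒᵖ] Λ) (z : Z) (h : Z →ₗ[Λᵐᵒᵖ] T) :
    h ∘ₗ tmul g0 z = tmul g0 (h z) := by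
  apply LinearMap.ext
  intro p
  show h (op (g0 p) • z) = op (g0 p) • h z
  rw [map_smul]

/-- expansion of a map `P1 → Z` via a dual basis -/
theorem tmul_expand {n : ℕ} (x : Fin n → P1) (α : Fin n → (P1 →ₗ[Λᵐᵒᵖ] Λ))
    (hdb : ∀ p : P1, ∑ i, op (α i p) • x i = p) (g : P1 →ₗ[Λᵐᵒᵖ] Z) :
    ∑ i, tmul (α i) (g (x i)) = g := by
  apply LinearMap.ext
  intro p
  rw [LinearMap.sum_apply]
  simp only [tmul_apply]
  have : ∑ i, op (α i p) • g (x i) = g (∑ i, op (α i p) • x i) := by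
    rw [map_sum]
    simp only [map_smul]
  rw [this, hdb]

/-- expansion of a functional `P1 → Λ` via a dual basis (bundled form). -/
theorem dual_expand {n : ℕ} (x : Fin n → P1) (α : Fin n → (P1 →ₗ[Λᵐᵒᵖ] Λ))
    (hdb : ∀ p : P1, ∑ i, op (α i p) • x i = p) (β : P1 →ₗ[Λᵐᵒᵖ] Λ) :
    ∑ i, β (x i) • α i = β := by
  apply LinearMap.ext
  intro p
  rw [LinearMap.sum_apply]
  simp only [LinearMap.smul_apply, smul_eq_mul]
  conv_rhs => rw [← hdb p, map_sum]
  apply Finset.sum_congr rfl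
  intro i _
  rw [map_smul, MulOpposite.smul_eq_mul_unop, unop_op]

/-- the key vanishing computation -/
theorem pair_vanish
    (d1 : P1 →ₗ[Λᵐᵒᵖ] P0) (q : (P1 →ₗ[Λᵐᵒᵖ] Λ) →ₗ[Λ] Tr)
    (hq0 : ∀ f0 : P0 →ₗ[Λᵐᵒᵖ] Λ, q (f0 ∘ₗ d1) = 0)
    (φ : T → Tr → k)
    (hφ1 : ∀ n n' m, φ (n + n') m = φ n m + φ n' m)
    (hφ2 : ∀ n m m', φ n (m + m') = φ n m + φ n m')
    (hφ4 : ∀ (a : Λ) n m, φ (op a • n) m = φ n (a • m))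
    {n' : ℕ} (x : Fin n' → P1) (α : Fin n' → (P1 →ₗ[Λᵐᵒᵖ] Λ))
    (hdb : ∀ p : P1, ∑ i, op (α i p) • x i = p)
    {m' : ℕ} (y : Fin m' → P0) (βb : Fin m' → (P0 →ₗ[Λᵐᵒᵖ] Λ))
    (hdb0 : ∀ p : P0, ∑ j, op (βb j p) • y j = p)
    (t : T) (g0 : P1 →ₗ[Λᵐᵒᵖ] Λ) (F : P0 →ₗ[Λᵐᵒᵖ] T)
    (hfac : tmul g0 t = F ∘ₗ d1) :
    φ t (q g0) = 0 := by
  classical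
  -- additive homs for sum manipulation
  have hφ0m : ∀ n0, φ n0 (0 : Tr) = 0 := by
    intro n0
    have := hφ2 n0 0 0
    simp only [add_zero] at this
    exact left_eq_add.mp this
  have hφ0n : ∀ m0, φ (0 : T) m0 = 0 := by
    intro m0
    have := hφ1 0 0 m0
    simp only [add_zero] at this
    exact left_eq_add.mp this
  have hsum_m : ∀ (n0 : T) (s : Finset (Fin n')) (f : Fin n' → Tr),
      φ n0 (∑ i ∈ s, f i) = ∑ i ∈ s, φ n0 (f i) := by
    intro n0 s f
    induction s using Finset.induction with
    | empty => simpa using hφ0m n0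
    | insert a s' hni ih =>
                       rw [Finset.sum_insert hni, Finset.sum_insert hni, hφ2, ih]
  have hsum_n : ∀ (m0 : Tr) (s : Finset (Fin m')) (f : Fin m' → T),
      φ (∑ j ∈ s, f j) m0 = ∑ j ∈ s, φ (f j) m0 := by
    intro m0 s f
    induction s using Finset.induction with
    | empty => simpa using hφ0n m0
    | insert a s' hni ih =>
                       rw [Finset.sum_insert hni, Finset.sum_insert hni, hφ1, ih]
  -- main computation
  have h1 : φ t (q g0) = ∑ i, φ t (g0 (x i) • q (α i)) := by
    conv_lhs => rw [← dual_expand x α hdb g0, map_sum]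
    rw [hsum_m]
    apply Finset.sum_congr rfl
    intro i _
    rw [map_smul]
  have h2 : ∀ i, φ t (g0 (x i) • q (α i)) = φ (F (d1 (x i))) (q (α i)) := by
    intro i
    rw [← hφ4]
    congr 1
    have : op (g0 (x i)) • t = tmul g0 t (x i) := rfl
    rw [this, hfac]
    rfl
  have hFexp : ∀ w : P0, F w = ∑ j, op (βb j w) • F (y j) := by
    intro w
    conv_lhs => rw [← hdb0 w]
    rw [map_sum]
    simp only [map_smul]
  have h3 : ∀ i, φ (F (d1 (x i))) (q (α i))
      = ∑ j, φ (F (y j)) ((βb j (d1 (x i))) • q (α i)) := by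
    intro i
    rw [hFexp (d1 (x i)), hsum_n]
    apply Finset.sum_congr rfl
    intro j _
    rw [hφ4]
  have h4 : ∀ j, ∑ i, φ (F (y j)) ((βb j (d1 (x i))) • q (α i)) = 0 := by
    intro j
    rw [← hsum_m]
    have h5 : ∑ i, (βb j (d1 (x i))) • q (α i) = q (∑ i, ((βb j ∘ₗ d1) (x i)) • α i) := by
      rw [map_sum]
      apply Finset.sum_congr rfl
      intro i _
      rw [map_smul]
      rfl
    rw [h5, dual_expand x α hdb (βb j ∘ₗ d1), hq0, hφ0m]
  calc φ t (q g0) = ∑ i, ∑ j, φ (F (y j)) ((βb j (d1 (x i))) • q (α i)) := by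
        rw [h1]
        apply Finset.sum_congr rfl
        intro i _
        rw [h2 i, h3 i]
    _ = ∑ j, ∑ i, φ (F (y j)) ((βb j (d1 (x i))) • q (α i)) := Finset.sum_comm
    _ = 0 := by
        apply Finset.sum_eq_zero
        intro j _
        exact h4 j

end Pairing

section Star
variable {k : Type} [Field k] {Λ : Type} [Ring Λ] [Algebra k Λ] [FiniteDimensional k Λ]
variable {P1 P0 T : Type}
  [AddCommGroup P1] [Module Λᵐᵒᵖ P1] [AddCommGroup P0] [Module Λᵐᵒᵖ P0]
  [AddCommGroup T] [Module Λᵐᵒᵖ T]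
  {Tr : Type} [AddCommGroup Tr] [Module Λ Tr]

/-- The key construction: if `g : P1 → Z` does not factor through `d1`, then there is a
nonzero homomorphism `Z → T` where `T = D Tr`. -/
theorem exists_nonzero_hom [Module.Finite Λᵐᵒᵖ P1]
    (d1 : P1 →ₗ[Λᵐᵒᵖ] P0) (q : (P1 →ₗ[Λᵐᵒᵖ] Λ) →ₗ[Λ] Tr)
    (hq : Function.Surjective q)
    (hkq : ∀ g0 : P1 →ₗ[Λᵐᵒᵖ] Λ, q g0 = 0 ↔ ∃ f0 : P0 →ₗ[Λᵐᵒᵖ] Λ, g0 = f0 ∘ₗ d1)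
    (φ : T → Tr → k)
    (hφ1 : ∀ n n' m, φ (n + n') m = φ n m + φ n' m)
    (hφ2 : ∀ n m m', φ n (m + m') = φ n m + φ n m')
    (hφ3 : ∀ (c : k) n m, φ n ((algebraMap k Λ c) • m) = c * φ n m)
    (hφ4 : ∀ (a : Λ) n m, φ (op a • n) m = φ n (a • m))
    (hφ5 : ∀ n, (∀ m, φ n m = 0) → n = 0)
    (hφ6 : ∀ m, (∀ n, φ n m = 0) → m = 0)
    {nn : ℕ} (x : Fin nn → P1) (α : Fin nn → (P1 →ₗ[Λᵐᵒᵖ] Λ))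
    (hdb : ∀ p : P1, ∑ i, op (α i p) • x i = p)
    (Z : Type) [AddCommGroup Z] [Module Λᵐᵒᵖ Z]
    (g : P1 →ₗ[Λᵐᵒᵖ] Z)
    (hgnf : ∀ f : P0 →ₗ[Λᵐᵒᵖ] Z, g ≠ f ∘ₗ d1) :
    ∃ h : Z →ₗ[Λᵐᵒᵖ] T, h ≠ 0 := by
  classical
  letI mZ : Module k Z := modK k Λ Z
  haveI := smulCommK k Λ Z
  haveI := towerK k Λ Z
  letI mTr : Module k Tr := modKL k Λ Tr
  haveI := towerKL k Λ Tr
  letI mT : Module k T := modK k Λ T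
  -- the subspace of maps factoring through d1
  set Cd1 : (P0 →ₗ[Λᵐᵒᵖ] Z) →ₗ[k] (P1 →ₗ[Λᵐᵒᵖ] Z) :=
    { toFun := fun f => f ∘ₗ d1
      map_add' := fun f f' => LinearMap.add_comp _ _ _
      map_smul' := fun c f => LinearMap.smul_comp c f d1 } with hCd1
  set V := LinearMap.range Cd1 with hV
  have hgV : g ∉ V := by
    rintro ⟨f, hf⟩
    exact hgnf f hf.symm
  -- a separating functional
  have hQg : (Submodule.Quotient.mk g : _ ⧸ V) ≠ 0 := by
    rw [Ne, Submodule.Quotient.mk_eq_zero]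
    exact hgV
  obtain ⟨ξ0, hξ0⟩ : ∃ ξ0 : Module.Dual k ((P1 →ₗ[Λᵐᵒᵖ] Z) ⧸ V),
      ξ0 (Submodule.Quotient.mk g) ≠ 0 := by
    by_contra hcon
    push_neg at hcon
    exact hQg ((Module.forall_dual_apply_eq_zero_iff k _).mp hcon)
  set ξ : (P1 →ₗ[Λᵐᵒᵖ] Z) →ₗ[k] k := ξ0 ∘ₗ V.mkQ with hξ
  have hξV : ∀ f : P0 →ₗ[Λᵐᵒᵖ] Z, ξ (f ∘ₗ d1) = 0 := by
    intro f
    have : (f ∘ₗ d1) ∈ V := ⟨f, rfl⟩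
    simp only [hξ, LinearMap.comp_apply, Submodule.mkQ_apply]
    rw [(Submodule.Quotient.mk_eq_zero V).mpr this, map_zero]
  have hξg : ξ g ≠ 0 := hξ0
  -- the tensoring maps
  have halgop : ∀ (c : k) (z : Z), (c • z : Z) = op (algebraMap k Λ c) • z := by
    intro c z
    show (algebraMap k Λᵐᵒᵖ c) • z = _
    rw [MulOpposite.algebraMap_apply]
  have tmul_k : ∀ (c : k) (g0 : P1 →ₗ[Λᵐᵒᵖ] Λ) (z : Z),
      tmul (c • g0) z = c • (tmul g0 z : P1 →ₗ[Λᵐᵒᵖ] Z) := by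
    intro c g0 z
    apply LinearMap.ext
    intro p
    show op ((c • g0) p) • z = c • (op (g0 p) • z)
    have e1 : (c • g0) p = algebraMap k Λ c * g0 p := by
      rw [LinearMap.smul_apply, Algebra.smul_def]
    have e2 : c • (op (g0 p) • z) = op (algebraMap k Λ c) • op (g0 p) • z := by
      rw [halgop]
    rw [e1, e2, ← mul_smul, ← op_mul, Algebra.commutes]
  set tz : Z → ((P1 →ₗ[Λᵐᵒᵖ] Λ) →ₗ[k] (P1 →ₗ[Λᵐᵒᵖ] Z)) := fun z =>
    { toFun := fun g0 => tmul g0 z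
      map_add' := fun g0 g0' => by
        apply LinearMap.ext
        intro p
        show op ((g0 + g0') p) • z = op (g0 p) • z + op (g0' p) • z
        rw [LinearMap.add_apply, MulOpposite.op_add, add_smul]
      map_smul' := fun c g0 => tmul_k c g0 z
      } with htz
  set q' : (P1 →ₗ[Λᵐᵒᵖ] Λ) →ₗ[k] Tr :=
    { toFun := q
      map_add' := map_add q
      map_smul' := fun c β => by
        show q (c • β) = c • q β
        have h1 : (c • β : P1 →ₗ[Λᵐᵒᵖ] Λ) = (algebraMap k Λ c) • β := by
          apply LinearMap.ext
          intro p
          rw [LinearMap.smul_apply, LinearMap.smul_apply, smul_eq_mul, Algebra.smul_def]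
        rw [h1, map_smul]
        rfl } with hq'
  have hq'surj : Function.Surjective q' := hq
  -- factor ξ ∘ tz through q'
  have hζ : ∀ z : Z, ∃ ζ : Tr →ₗ[k] k, ζ ∘ₗ q' = ξ ∘ₗ (tz z) := by
    intro z
    apply factor_through_surjective q' hq'surj
    intro g0 hg0
    have hg0' : q g0 = 0 := hg0
    obtain ⟨f0, hf0⟩ := (hkq g0).mp hg0'
    have hfac : tmul g0 z = (tmul f0 z) ∘ₗ d1 := by rw [hf0]; rfl
    have : (ξ ∘ₗ (tz z)) g0 = ξ (tmul g0 z) := rfl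
    simp only [LinearMap.mem_ker]
    rw [this, hfac]
    exact hξV _
  choose ζ hζspec using hζ
  have hζap : ∀ (z : Z) (g0 : P1 →ₗ[Λᵐᵒᵖ] Λ), ζ z (q g0) = ξ (tmul g0 z) := by
    intro z g0
    exact LinearMap.congr_fun (hζspec z) g0
  -- the pairing maps
  set φb : T →ₗ[k] Module.Dual k Tr :=
    { toFun := fun t =>
        { toFun := φ t
          map_add' := fun m m' => hφ2 t m m'
          map_smul' := fun c m => hφ3 c t m }
      map_add' := fun t t' => by
        apply LinearMap.ext
        intro m
        exact hφ1 t t' m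
      map_smul' := fun c t => by
        apply LinearMap.ext
        intro m
        show φ ((algebraMap k Λᵐᵒᵖ c) • t) m = c • φ t m
        rw [MulOpposite.algebraMap_apply, hφ4, hφ3, smul_eq_mul] } with hφb
  have hφbinj : Function.Injective φb := by
    rw [injective_iff_map_eq_zero]
    intro t ht
    exact hφ5 t (fun m => LinearMap.congr_fun ht m)
  set φs : Tr →ₗ[k] Module.Dual k T :=
    { toFun := fun m =>
        { toFun := fun t => φ t m
          map_add' := fun t t' => hφ1 t t' m
          map_smul' := fun c t => by
            show φ ((algebraMap k Λᵐᵒᵖ c) • t) m = c • φ t m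
            rw [MulOpposite.algebraMap_apply, hφ4, hφ3, smul_eq_mul] }
      map_add' := fun m m' => by
        apply LinearMap.ext
        intro t
        exact hφ2 t m m'
      map_smul' := fun c m => by
        apply LinearMap.ext
        intro t
        exact hφ3 c t m } with hφs
  have hφsinj : Function.Injective φs := by
    rw [injective_iff_map_eq_zero]
    intro m hm
    exact hφ6 m (fun t => LinearMap.congr_fun hm t)
  -- finite dimensionality
  haveI hfinH : FiniteDimensional k (P1 →ₗ[Λᵐᵒᵖ] Λ) := by
    obtain ⟨mm, πP, hπP⟩ := Module.Finite.exists_fin' Λᵐᵒᵖ P1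
    set ev : (P1 →ₗ[Λᵐᵒᵖ] Λ) →ₗ[k] (Fin mm → Λ) :=
      { toFun := fun β => fun j => β (πP (Pi.single j 1))
        map_add' := fun β β' => rfl
        map_smul' := fun c β => rfl } with hev
    have hevinj : Function.Injective ev := by
      rw [injective_iff_map_eq_zero]
      intro β hβ
      apply LinearMap.ext
      intro p
      obtain ⟨v, rfl⟩ := hπP p
      rw [← pi_expand v, map_sum, map_sum]
      apply Finset.sum_eq_zero
      intro j _
      rw [map_smul, map_smul]
      have : β (πP (Pi.single j 1)) = 0 := congr_fun hβ j
      rw [this, smul_zero]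
    exact FiniteDimensional.of_injective ev hevinj
  haveI hfinTr : FiniteDimensional k Tr := Module.Finite.of_surjective q' hq'surj
  haveI hfinT : FiniteDimensional k T := FiniteDimensional.of_injective φb hφbinj
  -- φb is bijective by dimension count
  have hrank : Module.finrank k T = Module.finrank k (Module.Dual k Tr) := by
    have h1 : Module.finrank k T ≤ Module.finrank k (Module.Dual k Tr) :=
      LinearMap.finrank_le_finrank_of_injective hφbinj
    have h2 : Module.finrank k Tr ≤ Module.finrank k (Module.Dual k T) :=
      LinearMap.finrank_le_finrank_of_injective hφsinj
    rw [Subspace.dual_finrank_eq] at h1 h2 ⊢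
    omega
  have hφbsurj : Function.Surjective φb := by
    rw [← LinearMap.range_eq_top]
    apply Submodule.eq_top_of_finrank_eq
    rw [LinearMap.finrank_range_of_inj hφbinj, hrank]
  set e : T ≃ₗ[k] Module.Dual k Tr := LinearEquiv.ofBijective φb ⟨hφbinj, hφbsurj⟩ with he
  set tv : Z → T := fun z => e.symm (ζ z) with htv
  have hchar : ∀ (z : Z) (m : Tr), φ (tv z) m = ζ z m := by
    intro z m
    have : φb (tv z) = ζ z := by
      show e (e.symm (ζ z)) = ζ z
      exact e.apply_symm_apply _
    exact LinearMap.congr_fun this m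
  -- difference lemma for φ
  have hφ0n : ∀ m0, φ (0 : T) m0 = 0 := by
    intro m0
    have := hφ1 0 0 m0
    simp only [add_zero] at this
    exact left_eq_add.mp this
  have hφinj2 : ∀ u v : T, (∀ m, φ u m = φ v m) → u = v := by
    intro u v huv
    have : ∀ m, φ (u - v) m = 0 := by
      intro m
      have h1 := hφ1 (u - v) v m
      rw [sub_add_cancel, huv m] at h1
      -- h1 : φ v m = φ (u-v) m + φ v m
      have : φ (u - v) m + φ v m - φ v m = φ v m - φ v m := by rw [← h1]
      simpa using this
    have := hφ5 _ this
    rwa [sub_eq_zero] at this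
  -- assemble h
  set h : Z →ₗ[Λᵐᵒᵖ] T :=
    { toFun := tv
      map_add' := fun z z' => by
        apply hφinj2
        intro m
        obtain ⟨g0, rfl⟩ := hq m
        rw [hchar, hζap]
        have h2 : φ (tv z + tv z') (q g0) = φ (tv z) (q g0) + φ (tv z') (q g0) := hφ1 _ _ _
        rw [h2, hchar, hchar, hζap, hζap, tmul_add, map_add]
      map_smul' := fun a z => by
        show tv (a • z) = a • tv z
        apply hφinj2
        intro m
        obtain ⟨g0, rfl⟩ := hq m
        rw [hchar, hζap]
        have h3 : φ (a • tv z) (q g0) = φ (op (unop a) • tv z) (q g0) := by rw [op_unop]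
        rw [h3, hφ4, ← map_smul, hchar, hζap, tmul_smul, op_unop] } with hh
  refine ⟨h, fun hzero => ?_⟩
  have htv0 : ∀ z : Z, tv z = 0 := by
    intro z
    exact LinearMap.congr_fun hzero z
  have hξz : ∀ (g0 : P1 →ₗ[Λᵐᵒᵖ] Λ) (z : Z), ξ (tmul g0 z) = 0 := by
    intro g0 z
    rw [← hζap, ← hchar, htv0, hφ0n]
  apply hξg
  rw [← tmul_expand x α hdb g, map_sum]
  apply Finset.sum_eq_zero
  intro i _
  exact hξz (α i) (g (x i))

end Star

section Pushout
variable {R : Type} [Ring R]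

theorem ext_factor {Y Z P1 P0 : Mdl R} (hext : Ext1Zero R Y Z)
    (d1 : P1 →ₗ[R] P0) (d0 : P0 →ₗ[R] Y)
    (hd0 : Function.Surjective d0) (hex : LinearMap.range d1 = LinearMap.ker d0)
    (g' : P1 →ₗ[R] Z) (hg' : LinearMap.ker d1 ≤ LinearMap.ker g') :
    ∃ f' : P0 →ₗ[R] Z, g' = f' ∘ₗ d1 := by
  classical
  set w : ↥P1 →ₗ[R] ↥Z × ↥P0 := LinearMap.prod g' (-d1) with hw
  set W := LinearMap.range w with hW
  set E : Mdl R := ModuleCat.of R ((↥Z × ↥P0) ⧸ W) with hE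
  set mk : (↥Z × ↥P0) →ₗ[R] ((↥Z × ↥P0) ⧸ W) := W.mkQ with hmk
  set i : ↥Z →ₗ[R] ↥E := mk ∘ₗ LinearMap.inl R ↥Z ↥P0 with hi_def
  have hd0d1 : ∀ v, d0 (d1 v) = 0 := by
    intro v
    have : d1 v ∈ LinearMap.ker d0 := hex ▸ LinearMap.mem_range_self d1 v
    exact this
  have hp0 : W ≤ LinearMap.ker (d0 ∘ₗ LinearMap.snd R ↥Z ↥P0) := by
    rintro ⟨z, w0⟩ ⟨v, hv⟩
    simp only [hw, LinearMap.prod_apply, Function.prod, Prod.mk.injEq, LinearMap.neg_apply] at hv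
    simp [LinearMap.mem_ker, ← hv.2, hd0d1 v]
  set p : ↥E →ₗ[R] ↥Y := W.liftQ (d0 ∘ₗ LinearMap.snd R ↥Z ↥P0) hp0 with hp_def
  have hi : Function.Injective i := by
    rw [← LinearMap.ker_eq_bot]
    rw [Submodule.eq_bot_iff]
    intro z hz
    have h0 : (Submodule.Quotient.mk (z, (0:↥P0)) : (↥Z × ↥P0) ⧸ W) = 0 := hz
    rw [Submodule.Quotient.mk_eq_zero] at h0
    obtain ⟨v, hv⟩ := h0
    simp only [hw, LinearMap.prod_apply, Function.prod, Prod.mk.injEq, LinearMap.neg_apply] at hv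
    have hv1 : v ∈ LinearMap.ker d1 := by
      rw [LinearMap.mem_ker, ← neg_eq_zero, ← hv.2]
    have := hg' hv1
    rw [LinearMap.mem_ker] at this
    rw [← hv.1, this]
  have hpsurj : Function.Surjective p := by
    intro y
    obtain ⟨w0, hw0⟩ := hd0 y
    exact ⟨mk (0, w0), hw0⟩
  have hrange : LinearMap.range i = LinearMap.ker p := by
    apply le_antisymm
    · rintro _ ⟨z, rfl⟩
      simp only [LinearMap.mem_ker]
      change d0 0 = 0
      exact map_zero d0
    · rintro e he
      obtain ⟨⟨z, w0⟩, rfl⟩ := Submodule.mkQ_surjective W e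
      have hw0 : d0 w0 = 0 := he
      have : w0 ∈ LinearMap.range d1 := hex ▸ hw0
      obtain ⟨v, hv⟩ := this
      refine ⟨z + g' v, ?_⟩
      show (Submodule.Quotient.mk (z + g' v, (0:↥P0)) : (↥Z × ↥P0) ⧸ W)
        = Submodule.Quotient.mk (z, w0)
      rw [Submodule.Quotient.eq]
      refine ⟨v, ?_⟩
      simp only [hw, LinearMap.prod_apply, Function.prod, LinearMap.neg_apply, Prod.mk_sub_mk,
        Prod.mk.injEq]
      constructor
      · abel
      · simp [hv]
  obtain ⟨s, hs⟩ := hext E i p hi hpsurj hrange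
  set e0 : ↥P0 →ₗ[R] ↥E := mk ∘ₗ LinearMap.inr R ↥Z ↥P0 with he0
  set δ : ↥P0 →ₗ[R] ↥E := e0 - s ∘ₗ d0 with hδ
  have hδrange : ∀ w0, δ w0 ∈ LinearMap.range i := by
    intro w0
    rw [hrange, LinearMap.mem_ker]
    have h1 : p (e0 w0) = d0 w0 := rfl
    have h2 : p (s (d0 w0)) = d0 w0 := by
      have := LinearMap.congr_fun hs (d0 w0)
      simpa using this
    simp [hδ, h1, h2]
  set f' : ↥P0 →ₗ[R] ↥Z :=
    (LinearEquiv.ofInjective i hi).symm.toLinearMap ∘ₗ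
      LinearMap.codRestrict (LinearMap.range i) δ hδrange with hf'
  have hif' : ∀ w0, i (f' w0) = δ w0 := by
    intro w0
    have h1 : (LinearEquiv.ofInjective i hi) (f' w0)
        = LinearMap.codRestrict (LinearMap.range i) δ hδrange w0 := by
      simp [hf']
    have := congrArg Subtype.val h1
    simpa [LinearEquiv.ofInjective_apply] using this
  refine ⟨f', ?_⟩
  apply LinearMap.ext
  intro v
  apply hi
  show i (g' v) = i (f' (d1 v))
  rw [hif']
  have h3 : δ (d1 v) = mk (0, d1 v) := by
    have : δ (d1 v) = e0 (d1 v) - s (d0 (d1 v)) := rfl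
    rw [this, hd0d1 v, map_zero, sub_zero]
    rfl
  rw [h3]
  show (Submodule.Quotient.mk (g' v, (0:↥P0)) : (↥Z × ↥P0) ⧸ W)
    = Submodule.Quotient.mk ((0:↥Z), d1 v)
  rw [Submodule.Quotient.eq]
  refine ⟨v, ?_⟩
  simp only [hw, LinearMap.prod_apply, Function.prod, LinearMap.neg_apply, Prod.mk_sub_mk,
    Prod.mk.injEq]
  constructor
  · abel
  · abel

end Pushout

end AuxiliaryLemmas

/-- Auslander–Smalø: `Hom_Λ(X, τ Y) = 0` iff `Ext¹_Λ(Y, Gen X) = 0`. -/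
theorem hom_tau_vanish_iff_ext_gen_vanish
    (k : Type) [Field k] (Λ : Type) [Ring Λ] [Algebra k Λ] [FiniteDimensional k Λ]
    (X Y : Mdl Λᵐᵒᵖ) [Module.Finite Λᵐᵒᵖ X] [Module.Finite Λᵐᵒᵖ Y]
    (T : Mdl Λᵐᵒᵖ) (hT : IsTau k Λ Y T) :
    HomZero Λᵐᵒᵖ X T ↔ ∀ Z : Mdl Λᵐᵒᵖ, MemGen Λᵐᵒᵖ X Z → Ext1Zero Λᵐᵒᵖ Y Z := by
  classical
  obtain ⟨P1, P0, d1, d0, hmin, Tr, q, hqsurj, hkq, hdual⟩ := hT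
  obtain ⟨φ, hφ1, hφ2, hφ3, hφ4, hφ5, hφ6⟩ := hdual
  obtain ⟨⟨hP0proj, hd0surj, hd0sup⟩, hP1proj, hexact, hd1sup⟩ := hmin
  haveI : Module.Projective Λᵐᵒᵖ ↥P0 := hP0proj
  haveI : Module.Projective Λᵐᵒᵖ ↥P1 := hP1proj
  haveI hfinP0 : Module.Finite Λᵐᵒᵖ ↥P0 := by
    apply finite_of_superfluous d0 ?_ hd0sup
    rw [LinearMap.range_eq_top.mpr hd0surj]
    exact Module.Finite.fg_top
  haveI hfinP1 : Module.Finite Λᵐᵒᵖ ↥P1 := by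
    apply finite_of_superfluous d1 ?_ hd1sup
    rw [hexact]
    exact submodule_fgK k Λ ↥P0 (LinearMap.ker d0)
  obtain ⟨nn, x, α, hdb⟩ := exists_dual_basis (Λ := Λ) ↥P1
  obtain ⟨mm, y, βb, hdb0⟩ := exists_dual_basis (Λ := Λ) ↥P0
  have hq0 : ∀ f0 : ↥P0 →ₗ[Λᵐᵒᵖ] Λ, q (f0 ∘ₗ d1) = 0 := fun f0 => (hkq _).mpr ⟨f0, rfl⟩
  have hd0d1 : ∀ v, d0 (d1 v) = 0 := by
    intro v
    have : d1 v ∈ LinearMap.ker d0 := hexact ▸ LinearMap.mem_range_self d1 v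
    exact this
  constructor
  · -- Hom(X, τY) = 0 implies Ext¹(Y, Gen X) = 0
    intro hhom Z hgen E i p hi hp hr
    -- Hom(Z, T) = 0
    have hhomZ : HomZero Λᵐᵒᵖ Z T := by
      intro h
      apply LinearMap.ext
      intro z
      obtain ⟨d, π, hπ⟩ := hgen
      obtain ⟨v, rfl⟩ := hπ z
      have hcomp : ∀ j : Fin d,
          h ∘ₗ π ∘ₗ LinearMap.single Λᵐᵒᵖ (fun _ : Fin d => ↥X) j = 0 := fun j => hhom _
      show h (π v) = 0
      have hv : v = ∑ j, Pi.single j (v j) := (Finset.univ_sum_single v).symm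
      calc h (π v) = ∑ j, h (π (Pi.single j (v j))) := by
            conv_lhs => rw [hv]
            rw [map_sum, map_sum]
        _ = 0 := Finset.sum_eq_zero fun j _ => by
            have := LinearMap.congr_fun (hcomp j) (v j)
            simpa using this
    -- lift the presentation
    obtain ⟨u, hu⟩ := Module.projective_lifting_property p d0 hp
    have hud1 : ∀ w, (u ∘ₗ d1) w ∈ LinearMap.range i := by
      intro w
      rw [hr, LinearMap.mem_ker]
      show p (u (d1 w)) = 0
      have h1 : p (u (d1 w)) = d0 (d1 w) := LinearMap.congr_fun hu (d1 w)
      rw [h1, hd0d1]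
    set g : ↥P1 →ₗ[Λᵐᵒᵖ] ↥Z :=
      (LinearEquiv.ofInjective i hi).symm.toLinearMap ∘ₗ
        LinearMap.codRestrict (LinearMap.range i) (u ∘ₗ d1) hud1 with hg
    have hig : ∀ w, i (g w) = u (d1 w) := by
      intro w
      have h1 : (LinearEquiv.ofInjective i hi) (g w)
          = LinearMap.codRestrict (LinearMap.range i) (u ∘ₗ d1) hud1 w := by
        simp [hg]
      have := congrArg Subtype.val h1
      simpa [LinearEquiv.ofInjective_apply] using this
    have hfac : ∃ f : ↥P0 →ₗ[Λᵐᵒᵖ] ↥Z, g = f ∘ₗ d1 := by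
      by_contra hcon
      push_neg at hcon
      obtain ⟨h, hne⟩ := exists_nonzero_hom d1 q hqsurj hkq φ hφ1 hφ2 hφ3 hφ4 hφ5 hφ6
        x α hdb ↥Z g hcon
      exact hne (hhomZ h)
    obtain ⟨f, hf⟩ := hfac
    set u' : ↥P0 →ₗ[Λᵐᵒᵖ] ↥E := u - i ∘ₗ f with hu'
    have hker : LinearMap.ker d0 ≤ LinearMap.ker u' := by
      intro w hw
      rw [LinearMap.mem_ker] at hw ⊢
      have : w ∈ LinearMap.range d1 := hexact ▸ hw
      obtain ⟨v, rfl⟩ := this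
      show u (d1 v) - i (f (d1 v)) = 0
      have h2 : f (d1 v) = g v := (LinearMap.congr_fun hf v).symm
      rw [h2, hig v, sub_self]
    obtain ⟨s, hs⟩ := factor_through_surjective d0 hd0surj u' hker
    refine ⟨s, ?_⟩
    apply LinearMap.ext
    intro yy
    obtain ⟨w, rfl⟩ := hd0surj yy
    show p (s (d0 w)) = d0 w
    have h1 : s (d0 w) = u' w := LinearMap.congr_fun hs w
    rw [h1]
    show p (u w - i (f w)) = d0 w
    have h2 : p (i (f w)) = 0 := by
      have : i (f w) ∈ LinearMap.ker p := hr ▸ LinearMap.mem_range_self i (f w)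
      exact this
    rw [map_sub, h2, sub_zero]
    exact LinearMap.congr_fun hu w
  · -- Ext¹(Y, Gen X) = 0 implies Hom(X, τY) = 0
    intro hext h
    -- every map P1 → X factors through d1
    have hstep : ∀ s : ↥P1 →ₗ[Λᵐᵒᵖ] ↥X, ∃ s' : ↥P1 →ₗ[Λᵐᵒᵖ] ↥X,
        (∃ f : ↥P0 →ₗ[Λᵐᵒᵖ] ↥X, s - s' = f ∘ₗ d1) ∧
        LinearMap.range s' ≤ (LinearMap.ker d1).map s := by
      intro s
      set U := (LinearMap.ker d1).map s with hU
      set Zq : Mdl Λᵐᵒᵖ := ModuleCat.of Λᵐᵒᵖ (↥X ⧸ U) with hZq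
      have hgen : MemGen Λᵐᵒᵖ X Zq := by
        refine ⟨1, U.mkQ ∘ₗ LinearMap.proj 0, ?_⟩
        intro z
        obtain ⟨xx, rfl⟩ := U.mkQ_surjective z
        exact ⟨fun _ => xx, rfl⟩
      have hker1 : LinearMap.ker d1 ≤ LinearMap.ker ((U.mkQ ∘ₗ s :
          ↥P1 →ₗ[Λᵐᵒᵖ] ↥Zq)) := by
        intro w hw
        rw [LinearMap.mem_ker]
        show U.mkQ (s w) = 0
        rw [Submodule.mkQ_apply, Submodule.Quotient.mk_eq_zero]
        exact Submodule.mem_map_of_mem hw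
      obtain ⟨f', hf'⟩ := ext_factor (hext Zq hgen) d1 d0 hd0surj hexact
        (U.mkQ ∘ₗ s) hker1
      obtain ⟨f, hf⟩ := Module.projective_lifting_property U.mkQ f' U.mkQ_surjective
      refine ⟨s - f ∘ₗ d1, ⟨f, by abel⟩, ?_⟩
      rintro xx ⟨w, rfl⟩
      show (s - f ∘ₗ d1) w ∈ U
      have hq1 : U.mkQ ((s - f ∘ₗ d1) w) = 0 := by
        have e1 : U.mkQ (s w) = f' (d1 w) := by
          have := LinearMap.congr_fun hf' w
          exact this
        have e2 : U.mkQ (f (d1 w)) = f' (d1 w) := LinearMap.congr_fun hf (d1 w)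
        rw [LinearMap.sub_apply, map_sub]
        show U.mkQ (s w) - U.mkQ (f (d1 w)) = 0
        rw [e1, e2, sub_self]
      rwa [Submodule.mkQ_apply, Submodule.Quotient.mk_eq_zero] at hq1
    choose step hstepV hstepU using hstep
    have hallfac : ∀ g : ↥P1 →ₗ[Λᵐᵒᵖ] ↥X, ∃ f : ↥P0 →ₗ[Λᵐᵒᵖ] ↥X, g = f ∘ₗ d1 := by
      intro g
      set σ : ℕ → (↥P1 →ₗ[Λᵐᵒᵖ] ↥X) := fun n => Nat.rec g (fun _ s => step s) n with hσ
      have hσs : ∀ n, σ (n+1) = step (σ n) := fun n => rfl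
      set U : ℕ → Submodule Λᵐᵒᵖ ↥X := fun n => (LinearMap.ker d1).map (σ n) with hUc
      have hmono : ∀ n, U (n+1) ≤ U n := by
        intro n
        have h1 : LinearMap.range (σ (n+1)) ≤ U n := by rw [hσs]; exact hstepU (σ n)
        rintro xx ⟨w, hw, rfl⟩
        exact h1 (LinearMap.mem_range_self _ w)
      obtain ⟨n, hn⟩ := chain_stabilizesK k Λ ↥X U hmono
      have hz : σ (n+1) = 0 := by
        have h1 : ∀ w, σ (n+1) w ∈ (LinearMap.ker d1).map (σ (n+1)) := by
          intro w
          apply hn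
          rw [hσs]
          exact hstepU (σ n) (LinearMap.mem_range_self _ w)
        have h2 : LinearMap.ker (σ (n+1)) ⊔ LinearMap.ker d1 = ⊤ := by
          rw [Submodule.eq_top_iff']
          intro w
          obtain ⟨κ, hκ, hκw⟩ := h1 w
          have hmem : w - κ ∈ LinearMap.ker (σ (n+1)) := by
            rw [LinearMap.mem_ker, map_sub, hκw, sub_self]
          have hw : w = (w - κ) + κ := by abel
          rw [hw]
          exact Submodule.add_mem_sup hmem hκ
        exact LinearMap.ker_eq_top.mp (hd1sup _ h2)
      have htel : ∀ m : ℕ, ∃ f : ↥P0 →ₗ[Λᵐᵒᵖ] ↥X, g - σ m = f ∘ₗ d1 := by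
        intro m
        induction m with
        | zero =>
          refine ⟨0, ?_⟩
          show g - g = (0 : ↥P0 →ₗ[Λᵐᵒᵖ] ↥X) ∘ₗ d1
          rw [sub_self, LinearMap.zero_comp]
        | succ n' ih =>
          obtain ⟨f1, hf1⟩ := ih
          obtain ⟨f2, hf2⟩ := hstepV (σ n')
          refine ⟨f1 + f2, ?_⟩
          rw [hσs]
          calc g - step (σ n') = (g - σ n') + (σ n' - step (σ n')) := by abel
            _ = f1 ∘ₗ d1 + f2 ∘ₗ d1 := by rw [hf1, hf2]
            _ = (f1 + f2) ∘ₗ d1 := (LinearMap.add_comp _ _ _).symm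
      obtain ⟨f, hf⟩ := htel (n+1)
      rw [hz, sub_zero] at hf
      exact ⟨f, hf⟩
    -- conclude
    apply LinearMap.ext
    intro xx
    show h xx = 0
    apply hφ5
    intro m
    obtain ⟨g0, rfl⟩ := hqsurj m
    obtain ⟨f, hf⟩ := hallfac (tmul g0 xx)
    apply pair_vanish d1 q hq0 φ hφ1 hφ2 hφ4 x α hdb y βb hdb0 (h xx) g0 (h ∘ₗ f)
    rw [← comp_tmul, hf, LinearMap.comp_assoc]
end
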